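/- Let A ∈ M(n,ℂ) satisfy the Okubo conditions, set A_j := E_j A for j = 1,…,p, and let λ ∈ ℂ with λ ≠ 0 and det(A + λI_n) ≠ 0 (i.e. −λ is not an eigenvalue of A). Then there exists a linear isomorphism ψ from the quotient space ℂ^{pn}/(K + L_λ) onto ℂ^n such that ψ ∘ Ḡ_j = (E_j(A + λI_n)) ∘ ψ for every j = 1,…,p; that is, the middle convolution mc_λ(A_1,…,A_p) is equivalent to the tuple (E_1(A+λI_n),…,E_p(A+λI_n)), the tuple of residue matrices of the Okubo-normal-form system with coefficient matrix A + λI_n. -/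

import Mathlib

/-!
Let `M : ℂ^{pn} → ℂ^n`, `M x = ∑ₖ Aₖ xₖ`, be the matrix with block columns `Aₖ = Eₖ A`.
It is surjective, since (O*) at `τ = 0` says that `Eᵢ A` maps onto the `i`-th block.
Its kernel is `K`, because the vectors `Aₖ xₖ` live in distinct blocks, and it contains `L_λ`:
on `L_λ` every block satisfies `λ xₖ = -M x`, hence `λ M x = ∑ₖ Aₖ (λ xₖ) = -A (M x)`, and
`det (A + λ) ≠ 0` forces `M x = 0`. Finally `M Gⱼ = Eⱼ (A + λ) M`, so `M` descends to the
required isomorphism `ℂ^{pn}/(K + L_λ) ≅ ℂ^n`.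
-/

open Matrix

/-- For the partition `n = n_1 + ⋯ + n_p`, realized by the index type
`Σ i, Fin (n_i)`, the diagonal idempotent `E_i` which is the identity on the rows of the
`i`-th block and zero elsewhere. -/
noncomputable def Eproj (p : ℕ) (nn : Fin p → ℕ) (i : Fin p) :
    Matrix ((j : Fin p) × Fin (nn j)) ((j : Fin p) × Fin (nn j)) ℂ :=
  fun x y => if x = y ∧ x.1 = i then 1 else 0

/-- The block matrix `G_j ∈ M(pn,ℂ)` of the (middle) convolution: its `j`-th block row is
`(A_1, …, A_{j-1}, A_j + λI, A_{j+1}, …, A_p)` and all other block rows vanish. -/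
noncomputable def Gmat {ι : Type} [Fintype ι] [DecidableEq ι] (p : ℕ)
    (B : Fin p → Matrix ι ι ℂ) (lam : ℂ) (j : Fin p) :
    Matrix (Fin p × ι) (Fin p × ι) ℂ :=
  fun x y => if x.1 = j then
    (B y.1 + if y.1 = j then lam • (1 : Matrix ι ι ℂ) else 0) x.2 y.2
  else 0

/-- The block-diagonal matrix `Ã = diag(A_1,…,A_p) ∈ M(pn,ℂ)`. -/
noncomputable def Atil {ι : Type} [Fintype ι] [DecidableEq ι] (p : ℕ)
    (B : Fin p → Matrix ι ι ℂ) : Matrix (Fin p × ι) (Fin p × ι) ℂ :=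
  fun x y => if x.1 = y.1 then B x.1 x.2 y.2 else 0

def blockRow {R ι : Type*} (p : ℕ) (B : Fin p → Matrix ι ι R) : Matrix ι (Fin p × ι) R :=
  fun r c => B c.1 r c.2

lemma blockRow_mulVec {R ι : Type*} [NonUnitalNonAssocSemiring R] [Fintype ι] {p : ℕ}
    (B : Fin p → Matrix ι ι R) (x : Fin p × ι → R) :
    blockRow p B *ᵥ x = ∑ k, B k *ᵥ Function.curry x k := by
  ext r
  simp [mulVec, dotProduct, Fintype.sum_prod_type, blockRow, Finset.sum_apply]

lemma exists_linearEquiv_comp_mapQ_eq_of_eq_ker {R V W ι : Type*} [CommRing R]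
    [AddCommGroup V] [Module R V] [AddCommGroup W] [Module R W]
    (f : V →ₗ[R] W) (hf : Function.Surjective f) {N : Submodule R V}
    (hN : N = LinearMap.ker f)
    (g : ι → V →ₗ[R] V) (h : ι → W →ₗ[R] W) (hcomm : ∀ i, f ∘ₗ g i = h i ∘ₗ f) :
    ∃ hg : ∀ i, N ≤ N.comap (g i), ∃ ψ : (V ⧸ N) ≃ₗ[R] W,
      ∀ i, ψ.toLinearMap ∘ₗ N.mapQ N (g i) (hg i) = h i ∘ₗ ψ.toLinearMap := by
  subst hN
  refine ⟨fun i x hx => ?_, f.quotKerEquivOfSurjective hf, fun i => ?_⟩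
  · rw [Submodule.mem_comap, LinearMap.mem_ker, ← LinearMap.comp_apply, hcomm,
      LinearMap.comp_apply, LinearMap.mem_ker.mp hx, map_zero]
  · ext x
    simpa using LinearMap.congr_fun (hcomm i) x

section Convolution

variable {ι : Type} [Fintype ι] [DecidableEq ι] {p : ℕ}

lemma Atil_mulVec_apply (B : Fin p → Matrix ι ι ℂ) (x : Fin p × ι → ℂ) (k : Fin p) (r : ι) :
    (Atil p B *ᵥ x) (k, r) = (B k *ᵥ Function.curry x k) r := by
  simp [mulVec, dotProduct, Fintype.sum_prod_type, Atil, ite_mul, Finset.sum_ite_eq]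

lemma curry_Gmat_mulVec (B : Fin p → Matrix ι ι ℂ) (lam : ℂ) (j : Fin p) (x : Fin p × ι → ℂ)
    (i : Fin p) :
    Function.curry (Gmat p B lam j *ᵥ x) i =
      if i = j then blockRow p B *ᵥ x + lam • Function.curry x j else 0 := by
  ext r
  split_ifs with h
  · subst h
    have hentry (k : Fin p) (t : ι) :
        (if k = i then lam • (1 : Matrix ι ι ℂ) else 0) r t =
          if k = i then lam • (1 : Matrix ι ι ℂ) r t else 0 := by
      split_ifs <;> rfl
    simp [mulVec, dotProduct, Fintype.sum_prod_type, Gmat, blockRow, add_mul, hentry,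
      ite_mul, Finset.sum_add_distrib, Matrix.one_apply]
  · simp [mulVec, dotProduct, Gmat, h]

lemma curry_sum_Gmat_mulVec (B : Fin p → Matrix ι ι ℂ) (lam : ℂ) (x : Fin p × ι → ℂ)
    (j : Fin p) :
    Function.curry ((∑ k, Gmat p B lam k) *ᵥ x) j =
      blockRow p B *ᵥ x + lam • Function.curry x j := by
  ext r
  have hk (k : Fin p) := congrFun (curry_Gmat_mulVec B lam k x j) r
  simp only [Function.curry_apply] at hk
  simp [sum_mulVec, Finset.sum_apply, hk, ite_apply]

lemma ker_sum_Gmat_le_ker_blockRow (B : Fin p → Matrix ι ι ℂ) {lam : ℂ}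
    (hdet : (∑ k, B k + lam • 1).det ≠ 0) :
    LinearMap.ker (∑ k, Gmat p B lam k).mulVecLin ≤ LinearMap.ker (blockRow p B).mulVecLin := by
  intro x hx
  rw [LinearMap.mem_ker, mulVecLin_apply] at hx ⊢
  set s := blockRow p B *ᵥ x
  have hblock (k : Fin p) : lam • Function.curry x k = -s := by
    have h := congrArg (fun y => Function.curry y k) hx
    simp only [curry_sum_Gmat_mulVec] at h
    exact eq_neg_of_add_eq_zero_right h
  have hs : (∑ k, B k + lam • 1) *ᵥ s = 0 := by
    have hsmul : lam • s = -((∑ k, B k) *ᵥ s) := by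
      simp only [s, blockRow_mulVec, Finset.smul_sum, ← mulVec_smul, hblock, mulVec_neg,
        sum_mulVec, Finset.sum_neg_distrib]
    rw [add_mulVec, smul_mulVec, one_mulVec, hsmul, add_neg_cancel]
  exact eq_zero_of_mulVec_eq_zero hdet hs

end Convolution

section Okubo

variable {p : ℕ} {nn : Fin p → ℕ}

lemma Eproj_mulVec_apply (i : Fin p) (v : (j : Fin p) × Fin (nn j) → ℂ)
    (r : (j : Fin p) × Fin (nn j)) :
    (Eproj p nn i *ᵥ v) r = if r.1 = i then v r else 0 := by
  simp [mulVec, dotProduct, Eproj, ite_and, Finset.sum_ite_eq]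

lemma sum_Eproj : ∑ i, Eproj p nn i = 1 := by
  ext x y
  simp [Matrix.sum_apply, Eproj, Matrix.one_apply, ite_and, Finset.sum_ite_eq]

lemma rank_Eproj (i : Fin p) : (Eproj p nn i).rank = nn i := by
  have hdiag : Eproj p nn i = diagonal fun r => if r.1 = i then 1 else 0 := by
    ext x y
    by_cases h : x = y
    · subst h; simp [Eproj]
    · simp [Eproj, h]
  rw [hdiag, rank_diagonal, ← Fintype.card_fin (nn i)]
  refine Fintype.card_congr ((Equiv.subtypeEquivRight fun r => ?_).trans (Equiv.sigmaSubtype i))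
  by_cases h : r.1 = i <;> simp [h]

lemma range_Eproj_mul_eq {A : Matrix ((j : Fin p) × Fin (nn j)) ((j : Fin p) × Fin (nn j)) ℂ}
    {i : Fin p} (hA : (Eproj p nn i * A).rank = nn i) :
    LinearMap.range (Eproj p nn i * A).mulVecLin = LinearMap.range (Eproj p nn i).mulVecLin := by
  refine Submodule.eq_of_le_of_finrank_le ?_ ?_
  · rw [mulVecLin_mul]
    exact LinearMap.range_comp_le_range _ _
  · change (Eproj p nn i).rank ≤ (Eproj p nn i * A).rank
    rw [hA, rank_Eproj]

variable (A : Matrix ((j : Fin p) × Fin (nn j)) ((j : Fin p) × Fin (nn j)) ℂ)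

lemma blockRow_Eproj_mul_mulVec_apply (x : Fin p × ((j : Fin p) × Fin (nn j)) → ℂ)
    (r : (j : Fin p) × Fin (nn j)) :
    (blockRow p (fun k => Eproj p nn k * A) *ᵥ x) r = (A *ᵥ Function.curry x r.1) r := by
  simp [blockRow_mulVec, Finset.sum_apply, ← mulVec_mulVec, Eproj_mulVec_apply]

lemma ker_Atil_Eproj_mul :
    LinearMap.ker (Atil p fun k => Eproj p nn k * A).mulVecLin =
      LinearMap.ker (blockRow p fun k => Eproj p nn k * A).mulVecLin := by
  ext x
  simp only [LinearMap.mem_ker, mulVecLin_apply, funext_iff, Prod.forall, Atil_mulVec_apply,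
    ← mulVec_mulVec, Eproj_mulVec_apply, blockRow_Eproj_mul_mulVec_apply, Pi.zero_apply]
  constructor
  · intro h r
    simpa using h r.1 r
  · intro h k r
    split_ifs with hr
    · exact hr ▸ h r
    · rfl

lemma surjective_blockRow_Eproj_mul (hA : ∀ i, (Eproj p nn i * A).rank = nn i) :
    Function.Surjective (blockRow p fun k => Eproj p nn k * A).mulVecLin := by
  intro w
  have hy (i : Fin p) : ∃ y, (Eproj p nn i * A) *ᵥ y = Eproj p nn i *ᵥ w := by
    simpa using (range_Eproj_mul_eq (hA i)).ge (LinearMap.mem_range_self _ w)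
  choose y hy using hy
  refine ⟨Function.uncurry y, funext fun r => ?_⟩
  have hr := congrFun (hy r.1) r
  simp only [← mulVec_mulVec, Eproj_mulVec_apply, if_true] at hr
  simpa [blockRow_Eproj_mul_mulVec_apply] using hr

lemma blockRow_mul_Gmat (lam : ℂ) (j : Fin p) :
    blockRow p (fun k => Eproj p nn k * A) * Gmat p (fun k => Eproj p nn k * A) lam j =
      Eproj p nn j * (A + lam • 1) * blockRow p (fun k => Eproj p nn k * A) := by
  refine ext_iff_mulVec.mpr fun x => funext fun r => ?_
  simp only [← mulVec_mulVec, blockRow_Eproj_mul_mulVec_apply, curry_Gmat_mulVec,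
    Eproj_mulVec_apply]
  split_ifs with hr
  · subst hr
    simp only [add_mulVec, mulVec_add, mulVec_smul, smul_mulVec, one_mulVec, Pi.add_apply,
      Pi.smul_apply, smul_eq_mul, blockRow_Eproj_mul_mulVec_apply]
  · simp

end Okubo

theorem stmt_8_general (p : ℕ) (nn : Fin p → ℕ)
    (A : Matrix ((j : Fin p) × Fin (nn j)) ((j : Fin p) × Fin (nn j)) ℂ)
    (hOstar : ∀ (i : Fin p) (τ : ℂ),
      ((A + τ • 1) * Eproj p nn i).rank = nn i ∧
      (Eproj p nn i * (A + τ • 1)).rank = nn i)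
    (lam : ℂ)
    (hdet : (A + lam • (1 : Matrix ((j : Fin p) × Fin (nn j))
      ((j : Fin p) × Fin (nn j)) ℂ)).det ≠ 0) :
    ∃ (hG : ∀ j : Fin p,
        LinearMap.ker (Atil p (fun i => Eproj p nn i * A)).mulVecLin ⊔
            LinearMap.ker (∑ k, Gmat p (fun i => Eproj p nn i * A) lam k).mulVecLin ≤
          Submodule.comap (Gmat p (fun i => Eproj p nn i * A) lam j).mulVecLin
            (LinearMap.ker (Atil p (fun i => Eproj p nn i * A)).mulVecLin ⊔
              LinearMap.ker (∑ k, Gmat p (fun i => Eproj p nn i * A) lam k).mulVecLin)),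
      ∃ ψ : ((Fin p × ((j : Fin p) × Fin (nn j)) → ℂ) ⧸
              (LinearMap.ker (Atil p (fun i => Eproj p nn i * A)).mulVecLin ⊔
                LinearMap.ker (∑ k, Gmat p (fun i => Eproj p nn i * A) lam k).mulVecLin))
            ≃ₗ[ℂ] (((j : Fin p) × Fin (nn j)) → ℂ),
        ∀ j : Fin p,
          ψ.toLinearMap ∘ₗ
              Submodule.mapQ _ _ (Gmat p (fun i => Eproj p nn i * A) lam j).mulVecLin
                (hG j) =
            (Eproj p nn j * (A + lam • 1)).mulVecLin ∘ₗ ψ.toLinearMap := by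
  have hrank (i : Fin p) : (Eproj p nn i * A).rank = nn i := by simpa using (hOstar i 0).2
  have hsum : ∑ k, Eproj p nn k * A = A := by rw [← Finset.sum_mul, sum_Eproj, one_mul]
  have hker := ker_sum_Gmat_le_ker_blockRow (fun k => Eproj p nn k * A) (hsum ▸ hdet)
  refine exists_linearEquiv_comp_mapQ_eq_of_eq_ker _ (surjective_blockRow_Eproj_mul A hrank)
    ?_ _ _ fun j => ?_
  · rw [ker_Atil_Eproj_mul, sup_eq_left.mpr hker]
  · rw [← mulVecLin_mul, ← mulVecLin_mul, blockRow_mul_Gmat]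

/-- Let `A` satisfy the Okubo conditions, `A_j := E_j A`, and `λ ≠ 0`
with `det(A + λI) ≠ 0`. Then `mc_λ(A_1,…,A_p)`, acting on `ℂ^{pn}/(K + L_λ)`, is
equivalent (via an isomorphism `ψ` onto `ℂ^n`) to the tuple
`(E_1(A+λI),…,E_p(A+λI))` of residue matrices of the Okubo system with matrix `A+λI`. -/
theorem stmt_8 (p : ℕ) (nn : Fin p → ℕ) (hpos : ∀ i, 0 < nn i)
    (A : Matrix ((j : Fin p) × Fin (nn j)) ((j : Fin p) × Fin (nn j)) ℂ)
    (hrank : A.rank = ∑ i, nn i)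
    (hOstar : ∀ (i : Fin p) (τ : ℂ),
      ((A + τ • 1) * Eproj p nn i).rank = nn i ∧
      (Eproj p nn i * (A + τ • 1)).rank = nn i)
    (lam : ℂ) (hlam : lam ≠ 0)
    (hdet : (A + lam • (1 : Matrix ((j : Fin p) × Fin (nn j))
      ((j : Fin p) × Fin (nn j)) ℂ)).det ≠ 0) :
    ∃ (hG : ∀ j : Fin p,
        LinearMap.ker (Atil p (fun i => Eproj p nn i * A)).mulVecLin ⊔
            LinearMap.ker (∑ k, Gmat p (fun i => Eproj p nn i * A) lam k).mulVecLin ≤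
          Submodule.comap (Gmat p (fun i => Eproj p nn i * A) lam j).mulVecLin
            (LinearMap.ker (Atil p (fun i => Eproj p nn i * A)).mulVecLin ⊔
              LinearMap.ker (∑ k, Gmat p (fun i => Eproj p nn i * A) lam k).mulVecLin)),
      ∃ ψ : ((Fin p × ((j : Fin p) × Fin (nn j)) → ℂ) ⧸
              (LinearMap.ker (Atil p (fun i => Eproj p nn i * A)).mulVecLin ⊔
                LinearMap.ker (∑ k, Gmat p (fun i => Eproj p nn i * A) lam k).mulVecLin))
            ≃ₗ[ℂ] (((j : Fin p) × Fin (nn j)) → ℂ),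
        ∀ j : Fin p,
          ψ.toLinearMap ∘ₗ
              Submodule.mapQ _ _ (Gmat p (fun i => Eproj p nn i * A) lam j).mulVecLin
                (hG j) =
            (Eproj p nn j * (A + lam • 1)).mulVecLin ∘ₗ ψ.toLinearMap :=
  stmt_8_general p nn A hOstar lam hdet
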